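/- Let G be a non-planar graph with two vertices x, y such that splitting x into x1,x2 and y into y1,y2 yields a planar graph with x1, x2, y1, y2 on a common face. Then the graph obtained from G by identifying x and y (and simplifying) is planar. -/

import Mathlib

open SimpleGraph

namespace AltPaper

variable {V : Type*} {W : Type*} {U : Type*}

/-- The dart-reversal permutation of a graph. -/
def dartRev (G : SimpleGraph V) : Equiv.Perm G.Dart :=
  Function.Involutive.toPerm SimpleGraph.Dart.symm SimpleGraph.Dart.symm_involutive

/-- A combinatorial embedding of `G` into an orientable surface, given by a rotation system:
a permutation of the darts whose orbits are exactly the stars of the vertices. -/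
structure RotSys (G : SimpleGraph V) where
  rot : Equiv.Perm G.Dart
  fst_rot : ∀ d : G.Dart, (rot d).fst = d.fst
  orbit_full : ∀ d d' : G.Dart, d.fst = d'.fst → ∃ n : ℕ, (rot ^ n) d = d'

namespace RotSys

variable {G : SimpleGraph V}

/-- The face-tracing permutation of the rotation system. -/
def facePerm (R : RotSys G) : Equiv.Perm G.Dart := (dartRev G).trans R.rot

/-- The number of faces of the embedding: the number of orbits of the face permutation. -/
noncomputable def numFaces (R : RotSys G) : ℕ :=
  Nat.card (MulAction.orbitRel.Quotient (Subgroup.zpowers R.facePerm) G.Dart)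

/-- The number of non-isolated vertices: orbits of the rotation. -/
noncomputable def numVerts (R : RotSys G) : ℕ :=
  Nat.card (MulAction.orbitRel.Quotient (Subgroup.zpowers R.rot) G.Dart)

/-- The number of connected components containing at least one edge. -/
noncomputable def numComps (R : RotSys G) : ℕ :=
  Nat.card (MulAction.orbitRel.Quotient (Subgroup.closure {R.rot, dartRev G}) G.Dart)

/-- By Euler's formula, the (total, orientable) genus of the embedding `R` is at most `k`.
Isolated vertices are irrelevant for the genus and are ignored. -/
noncomputable def genusLE (R : RotSys G) (k : ℕ) : Prop :=
  2 * R.numComps + Nat.card G.edgeSet ≤ 2 * k + R.numFaces + R.numVerts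

/-- Vertices `v₁ v₂ v₃ v₄` appear (in this cyclic order) on a common face of `R`. -/
def cyclicOrderedFace (R : RotSys G) (v₁ v₂ v₃ v₄ : V) : Prop :=
  ∃ (d : G.Dart) (a b c : ℕ), 0 < a ∧ a < b ∧ b < c ∧
    c < Function.minimalPeriod (⇑R.facePerm) d ∧
    d.fst = v₁ ∧ ((R.facePerm ^ a) d).fst = v₂ ∧ ((R.facePerm ^ b) d).fst = v₃ ∧
    ((R.facePerm ^ c) d).fst = v₄

/-- There is a face of `R` in which `x` and `y` appear (at least) twice, in the alternating
cyclic order `x, y, x, y`. -/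
def altFace (R : RotSys G) (x y : V) : Prop := R.cyclicOrderedFace x y x y

/-- `u` and `v` lie on a common face of `R`. -/
def Cofacial (R : RotSys G) (u v : V) : Prop :=
  ∃ (d : G.Dart) (n : ℕ), d.fst = u ∧ ((R.facePerm ^ n) d).fst = v

/-- All vertices of `s` lie on a common face of `R`. -/
def CofacialSet (R : RotSys G) (s : Set V) : Prop :=
  ∃ d : G.Dart, ∀ v ∈ s, ∃ n : ℕ, ((R.facePerm ^ n) d).fst = v

end RotSys

/-- `G` embeds in the orientable surface of genus `k`. -/
def GenusLE (G : SimpleGraph V) (k : ℕ) : Prop := ∃ R : RotSys G, R.genusLE k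

/-- `G` has an embedding in the orientable surface of genus `k` with a face in which the
vertices `x` and `y` appear twice, in alternating cyclic order. -/
def AltEmb (G : SimpleGraph V) (x y : V) (k : ℕ) : Prop :=
  ∃ R : RotSys G, R.genusLE k ∧ R.altFace x y

end AltPaper
namespace AltPaper

variable {V : Type*} {W : Type*} {U : Type*}

/-- A combinatorial embedding of `G` into a (possibly non-orientable) surface:
a rotation system together with a signature on the edges. -/
structure SRS (G : SimpleGraph V) where
  rot : Equiv.Perm G.Dart
  fst_rot : ∀ d : G.Dart, (rot d).fst = d.fst
  orbit_full : ∀ d d' : G.Dart, d.fst = d'.fst → ∃ n : ℕ, (rot ^ n) d = d'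
  sign : Sym2 V → Bool

namespace SRS

variable {G : SimpleGraph V}

/-- Auxiliary involution used in signed face tracing: reverse the dart and update the side. -/
def flip (S : SRS G) : Equiv.Perm (G.Dart × Bool) :=
  Function.Involutive.toPerm (fun p => (p.1.symm, xor p.2 (S.sign p.1.edge)))
    (by
      rintro ⟨d, s⟩
      have h1 : d.symm.symm = d := SimpleGraph.Dart.symm_involutive d
      have h2 : d.symm.edge = d.edge := SimpleGraph.Dart.edge_symm d
      simp [h1, h2, Bool.xor_assoc])

/-- Auxiliary permutation used in signed face tracing: apply the rotation forwards or
backwards according to the current side. -/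
def rotPm (S : SRS G) : Equiv.Perm (G.Dart × Bool) where
  toFun p := (cond p.2 (S.rot p.1) (S.rot.symm p.1), p.2)
  invFun p := (cond p.2 (S.rot.symm p.1) (S.rot p.1), p.2)
  left_inv := by rintro ⟨d, (_ | _)⟩ <;> simp
  right_inv := by rintro ⟨d, (_ | _)⟩ <;> simp

/-- The signed face-tracing permutation, acting on sided darts. -/
def facePerm (S : SRS G) : Equiv.Perm (G.Dart × Bool) := (S.flip).trans (S.rotPm)

/-- Twice the number of faces (each face is traced once on each side). -/
noncomputable def numFaces2 (S : SRS G) : ℕ :=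
  Nat.card (MulAction.orbitRel.Quotient (Subgroup.zpowers S.facePerm) (G.Dart × Bool))

noncomputable def numVerts (S : SRS G) : ℕ :=
  Nat.card (MulAction.orbitRel.Quotient (Subgroup.zpowers S.rot) G.Dart)

noncomputable def numComps (S : SRS G) : ℕ :=
  Nat.card (MulAction.orbitRel.Quotient (Subgroup.closure {S.rot, dartRev G}) G.Dart)

/-- Twice the (total) Euler genus of the embedding, via Euler's formula. -/
noncomputable def eulerGenus2 (S : SRS G) : ℤ :=
  4 * S.numComps - 2 * S.numVerts + 2 * Nat.card G.edgeSet - S.numFaces2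

/-- The Euler genus of the embedding is at most `h`. -/
noncomputable def eulerGenusLE (S : SRS G) (h : ℕ) : Prop := S.eulerGenus2 ≤ 2 * h

/-- The sided darts `p` and `q` lie on the same face. -/
def SameFace (S : SRS G) (p q : G.Dart × Bool) : Prop := ∃ n : ℤ, (S.facePerm ^ n) p = q

/-- The set of darts of the facial walk of the face of `p`. -/
def faceDarts (S : SRS G) (p : G.Dart × Bool) : Set G.Dart :=
  {d | ∃ q, S.SameFace p q ∧ q.1 = d}

/-- The vertex `v` appears on the facial walk of the face of `p`. -/
def vertexOnFace (S : SRS G) (p : G.Dart × Bool) (v : V) : Prop :=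
  ∃ d ∈ S.faceDarts p, d.fst = v

/-- The facial walk of the face of `p` visits `x` and `y` in alternating cyclic order
`x, y, x, y`. -/
def altFaceS (S : SRS G) (p : G.Dart × Bool) (x y : V) : Prop :=
  ∃ (a b c : ℕ), 0 < a ∧ a < b ∧ b < c ∧
    c < Function.minimalPeriod (⇑S.facePerm) p ∧
    p.1.fst = x ∧ ((S.facePerm ^ a) p).1.fst = y ∧ ((S.facePerm ^ b) p).1.fst = x ∧
    ((S.facePerm ^ c) p).1.fst = y

end SRS

/-- `G` embeds in the projective plane. -/
def ProjPlanar (G : SimpleGraph V) : Prop := ∃ S : SRS G, S.eulerGenusLE 1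

end AltPaper
namespace AltPaper

variable {V : Type*} {W : Type*} {U : Type*}

/-! ### The multigraph obtained by identifying two vertices, and its planar embeddings -/

/-- The darts of the multigraph `Ĥ` obtained from `G` by identifying `x` and `y`
(deleting the edge `xy` first, if present). -/
def PD (G : SimpleGraph V) (x y : V) : Type _ := {d : G.Dart // d.edge ≠ s(x, y)}

/-- The source vertex of a dart of `Ĥ`: the identified vertex `v_{xy}` is represented by `x`. -/
def psrc (G : SimpleGraph V) (x y : V) [DecidableEq V] (d : PD G x y) : V :=
  if d.val.fst = y then x else d.val.fst

/-- Dart reversal in `Ĥ`. -/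
def prev (G : SimpleGraph V) (x y : V) : Equiv.Perm (PD G x y) :=
  Function.Involutive.toPerm
    (fun d => ⟨d.val.symm, by rw [SimpleGraph.Dart.edge_symm]; exact d.prop⟩)
    (by
      rintro ⟨d, hd⟩
      exact Subtype.ext (SimpleGraph.Dart.symm_involutive d))

/-- A combinatorial embedding (in an orientable surface) of the multigraph `Ĥ` obtained from
`G` by identifying `x` and `y` into the vertex `v_{xy}` (loops are discarded). -/
structure PinchRS (G : SimpleGraph V) (x y : V) [DecidableEq V] where
  rot : Equiv.Perm (PD G x y)
  src_rot : ∀ d, psrc G x y (rot d) = psrc G x y d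
  orbit_full : ∀ d d', psrc G x y d = psrc G x y d' → ∃ n : ℕ, (rot ^ n) d = d'

namespace PinchRS

variable [DecidableEq V] {G : SimpleGraph V} {x y : V}

def facePerm (P : PinchRS G x y) : Equiv.Perm (PD G x y) := (prev G x y).trans P.rot

noncomputable def numFaces (P : PinchRS G x y) : ℕ :=
  Nat.card (MulAction.orbitRel.Quotient (Subgroup.zpowers P.facePerm) (PD G x y))

noncomputable def numVerts (P : PinchRS G x y) : ℕ :=
  Nat.card (MulAction.orbitRel.Quotient (Subgroup.zpowers P.rot) (PD G x y))

noncomputable def numComps (P : PinchRS G x y) : ℕ :=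
  Nat.card (MulAction.orbitRel.Quotient (Subgroup.closure {P.rot, prev G x y}) (PD G x y))

/-- The embedding `P` of `Ĥ` is planar (Euler's formula; the dart count is twice the
edge count). -/
noncomputable def Planar (P : PinchRS G x y) : Prop :=
  4 * P.numComps + Nat.card (PD G x y) ≤ 2 * P.numFaces + 2 * P.numVerts

/-- The number of label transitions in the cyclic sequence of labels around the identified
vertex `v_{xy}`: a dart incident with `v_{xy}` is labelled `X` when it comes from `x`. -/
noncomputable def pinchTrans (P : PinchRS G x y) : ℕ :=
  Nat.card {d : PD G x y // psrc G x y d = x ∧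
    ¬ ((d.val.fst = x) ↔ ((P.rot d).val.fst = x))}

end PinchRS

/-! ### Splitting the two terminals -/

/-- The projection recording that `Sum.inr false` is the second copy of `x` and
`Sum.inr true` is the second copy of `y` (while `Sum.inl x`, `Sum.inl y` are the first
copies). -/
def splitProj (x y : V) : V ⊕ Bool → V
  | Sum.inl v => v
  | Sum.inr false => x
  | Sum.inr true => y

/-- `G'` is obtained from `G` by splitting `x` into `x₁ = Sum.inl x`, `x₂ = Sum.inr false`
and `y` into `y₁ = Sum.inl y`, `y₂ = Sum.inr true`, distributing the incident edges. -/
def IsSplitAt (G : SimpleGraph V) (x y : V) (G' : SimpleGraph (V ⊕ Bool)) : Prop :=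
  (∀ a b, G'.Adj a b → G.Adj (splitProj x y a) (splitProj x y b)) ∧
  (∀ u v, G.Adj u v → ∃ a b, G'.Adj a b ∧ splitProj x y a = u ∧ splitProj x y b = v) ∧
  (∀ a b a' b', G'.Adj a b → G'.Adj a' b' →
    splitProj x y a = splitProj x y a' → splitProj x y b = splitProj x y b' → a = a' ∧ b = b')

/-- The simple graph `G/xy` obtained from `G` by identifying `x` and `y` (the edge `xy`,
if present, is deleted first, and multiple edges are merged); the merged vertex is `x`,
and `y` becomes isolated. -/
def pinch (G : SimpleGraph V) (x y : V) : SimpleGraph V :=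
  SimpleGraph.fromRel (fun a b => a ≠ y ∧ b ≠ y ∧
    ∃ a' b', G.Adj a' b' ∧ (a' = a ∨ (a' = y ∧ a = x)) ∧ (b' = b ∨ (b' = y ∧ b = x)))

/-- The graph `G*`: the `xy`-sum of `G` with a copy of `K₅` minus an edge, the two ends of
the deleted edge being identified with `x` and `y`. -/
def Gstar (G : SimpleGraph V) (x y : V) : SimpleGraph (V ⊕ Fin 3) :=
  SimpleGraph.fromRel (fun a b =>
    (∃ u v, a = Sum.inl u ∧ b = Sum.inl v ∧ G.Adj u v) ∨
    (∃ i j : Fin 3, a = Sum.inr i ∧ b = Sum.inr j) ∨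
    (∃ i : Fin 3, a = Sum.inr i ∧ (b = Sum.inl x ∨ b = Sum.inl y)))

/-- The two-terminal graph corresponding to an `XY`-labelled graph `H`:
add the terminal `x = Sum.inr false` joined to all `X`-labelled vertices and the terminal
`y = Sum.inr true` joined to all `Y`-labelled vertices. -/
def termGraph (H : SimpleGraph W) (lX lY : W → Prop) : SimpleGraph (W ⊕ Bool) :=
  SimpleGraph.fromRel (fun a b =>
    (∃ u v, a = Sum.inl u ∧ b = Sum.inl v ∧ H.Adj u v) ∨
    (∃ u, a = Sum.inr false ∧ b = Sum.inl u ∧ lX u) ∨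
    (∃ u, a = Sum.inr true ∧ b = Sum.inl u ∧ lY u))

/-- Identification map used for `xy`-sums: `w₁ ↦ u₁`, `w₂ ↦ u₂`. -/
def sumRho [DecidableEq W] (u₁ u₂ : U) (w₁ w₂ : W) : W → U ⊕ W := fun w =>
  if w = w₁ then Sum.inl u₁ else if w = w₂ then Sum.inl u₂ else Sum.inr w

/-- The `xy`-sum of `H₁` (with terminals `u₁, u₂`) and `H₂` (with terminals `w₁, w₂`):
their union after identifying `u₁` with `w₁` and `u₂` with `w₂`; the edge between the two
identified vertices is deleted even if present in a summand. -/
def xySum [DecidableEq W] (H₁ : SimpleGraph U) (u₁ u₂ : U)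
    (H₂ : SimpleGraph W) (w₁ w₂ : W) : SimpleGraph (U ⊕ W) :=
  SimpleGraph.fromRel (fun p q => s(p, q) ≠ s(Sum.inl u₁, Sum.inl u₂) ∧
    ((∃ a b, p = Sum.inl a ∧ q = Sum.inl b ∧ H₁.Adj a b) ∨
     (∃ a b, H₂.Adj a b ∧ p = sumRho u₁ u₂ w₁ w₂ a ∧ q = sumRho u₁ u₂ w₁ w₂ b)))

/-! ### Subdivisions -/

/-- A subdivision of `K` contained in `G`: branch vertices are given by the injection `f`,
branches are internally disjoint paths avoiding the branch vertices. -/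
structure SubdivisionEmb (K : SimpleGraph U) (G : SimpleGraph V) where
  f : U → V
  inj : Function.Injective f
  walk : ∀ {a b : U}, K.Adj a b → G.Walk (f a) (f b)
  isPath : ∀ {a b : U} (h : K.Adj a b), (walk h).IsPath
  symmCompat : ∀ {a b : U} (h : K.Adj a b), walk h.symm = (walk h).reverse
  internal_disj : ∀ {a b c d : U} (h₁ : K.Adj a b) (h₂ : K.Adj c d), s(a, b) ≠ s(c, d) →
    ∀ v, v ∈ (walk h₁).support → v ∈ (walk h₂).support →
      (v = f a ∨ v = f b) ∧ (v = f c ∨ v = f d)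
  branch_only : ∀ {a b : U} (h : K.Adj a b) (u : U), f u ∈ (walk h).support → u = a ∨ u = b

/-- The set of vertices of the subdivision. -/
def SubSupport {K : SimpleGraph U} {G : SimpleGraph V} (s : SubdivisionEmb K G) : Set V :=
  {v | ∃ (a b : U) (h : K.Adj a b), v ∈ (s.walk h).support}

/-- The set of edges of the subdivision. -/
def SubEdges {K : SimpleGraph U} {G : SimpleGraph V} (s : SubdivisionEmb K G) : Set (Sym2 V) :=
  {e | ∃ (a b : U) (h : K.Adj a b), e ∈ (s.walk h).edges}

/-! ### Blocks -/

/-- `B` is a block of `H`: a maximal connected vertex set without cutvertex. -/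
def IsBlock (H : SimpleGraph W) (B : Set W) : Prop :=
  B.Nonempty ∧ (H.induce B).Preconnected ∧ (∀ v : W, (H.induce (B \ {v})).Preconnected) ∧
  ∀ B' : Set W, B ⊆ B' →
    ((H.induce B').Preconnected ∧ ∀ v : W, (H.induce (B' \ {v})).Preconnected) → B' = B

/-! ### Bridges of a cycle -/

/-- The `C`-bridge generated by a set `K` of vertices (the component) : `K` together with
all edges leaving `K` and their endpoints. -/
def bridgeOf (G : SimpleGraph V) (K : Set V) : G.Subgraph where
  verts := K ∪ {v | ∃ u ∈ K, G.Adj u v}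
  Adj a b := G.Adj a b ∧ (a ∈ K ∨ b ∈ K)
  adj_sub h := h.1
  edge_vert := by
    rintro a b ⟨h, ha | hb⟩
    · exact Or.inl ha
    · exact Or.inr ⟨b, hb, h.symm⟩
  symm := by
    constructor
    rintro a b ⟨h, hab⟩
    exact ⟨h.symm, hab.symm⟩

/-- `B` is a `C`-bridge in `G`, for a closed walk `C`: either a chord of `C`, or a connected
component of `G - V(C)` together with all edges joining it to `C`. -/
def IsCBridge {r : V} (G : SimpleGraph V) (C : G.Walk r r) (B : G.Subgraph) : Prop :=
  (∃ (a b : V) (h : G.Adj a b), a ∈ C.support ∧ b ∈ C.support ∧ s(a, b) ∉ C.edges ∧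
      B = G.subgraphOfAdj h) ∨
  (∃ c : (G.induce {v | v ∉ C.support}).ConnectedComponent,
      B = bridgeOf G (Subtype.val '' c.supp))

/-- The attachments of a `C`-bridge `B`. -/
def attachments {G : SimpleGraph V} {r : V} (C : G.Walk r r) (B : G.Subgraph) : Set V :=
  B.verts ∩ {v | v ∈ C.support}

/-- The vertex set of the segment `C[u,v]` of the closed walk `C` from `u` to `v` (in the
orientation of `C`). -/
def segSet [DecidableEq V] {r : V} (G : SimpleGraph V) (C : G.Walk r r) (u v : V) : Set V :=
  {w | ∃ (hu : u ∈ C.support) (hv : v ∈ (C.rotate u hu).support),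
    w ∈ ((C.rotate u hu).takeUntil v hv).support}

/-- Two `C`-bridges avoid each other. -/
def Avoid [DecidableEq V] {r : V} (G : SimpleGraph V) (C : G.Walk r r)
    (B₁ B₂ : G.Subgraph) : Prop :=
  ∃ u v, u ∈ C.support ∧ v ∈ C.support ∧
    attachments C B₁ ⊆ segSet G C u v ∧ attachments C B₂ ⊆ segSet G C v u

/-- Two `C`-bridges overlap. -/
def Overlap [DecidableEq V] {r : V} (G : SimpleGraph V) (C : G.Walk r r)
    (B₁ B₂ : G.Subgraph) : Prop := ¬ Avoid G C B₁ B₂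

/-! ### The classes `A^k_{xy}` and their obstructions -/

/-- Contraction of the edge `uv` of `G`: `v` is merged into `u` (and becomes isolated). -/
def contractEdge (G : SimpleGraph V) (u v : V) : SimpleGraph V :=
  SimpleGraph.fromRel (fun a b => a ≠ v ∧ b ≠ v ∧
    (G.Adj a b ∨ (a = u ∧ G.Adj v b) ∨ (b = u ∧ G.Adj a v)))

/-- The class `A^k_{xy}`: `G` embeds in the orientable surface of genus `k-1`, or `G` is
`xy`-alternating on the orientable surface of genus `k`. -/
def Akxy (G : SimpleGraph V) (x y : V) (k : ℕ) : Prop :=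
  GenusLE G (k - 1) ∨ AltEmb G x y k

/-- `G` (with terminals `x, y`) is an obstruction for the class `A^k_{xy}`: it is not in the
class, but every deletion and every allowed contraction (one which does not identify the two
terminals) is. -/
def MinimalNotAk (G : SimpleGraph V) (x y : V) (k : ℕ) : Prop :=
  ¬ Akxy G x y k ∧
  (∀ e ∈ G.edgeSet, Akxy (G.deleteEdges {e}) x y k) ∧
  (∀ u v, G.Adj u v → v ≠ x → v ≠ y → Akxy (contractEdge G u v) x y k)

/-! ### Cyclic label sequences -/

/-- The number of transitions between consecutive entries of a list. -/
def listTrans (w : List Bool) : ℕ := ((w.zip w.tail).filter (fun p => p.1 ≠ p.2)).length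

/-- The number of transitions of a list, viewed as a cyclic sequence. -/
def cycTrans : List Bool → ℕ
  | [] => 0
  | a :: t => listTrans ((a :: t) ++ [a])

/-- The cyclic sequence of labelled vertices (labels are subsets of `{X, Y}`, with
`true = X`, `false = Y`) contains six distinct vertices, in this cyclic order or its
reverse, whose labels contain `X, Y, X, Y, X, Y` respectively. -/
def HasXYXYXY (n : ℕ) (lab : ZMod (n + 1) → Finset Bool) : Prop :=
  ∃ (s : ZMod (n + 1)) (a : Fin 6 → ℕ) (ε : Bool), StrictMono a ∧ a 5 ≤ n ∧
    ∀ k : Fin 6, (decide (k.val % 2 = 0)) ∈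
      lab (s + (if ε then ((a k : ℕ) : ZMod (n + 1)) else -((a k : ℕ) : ZMod (n + 1))))

/-- `L` arranges the labels of each vertex of the cyclic sequence into a list (each label
used exactly once). -/
def IsArrangement (n : ℕ) (lab : ZMod (n + 1) → Finset Bool)
    (L : ZMod (n + 1) → List Bool) : Prop :=
  ∀ i, (L i).Nodup ∧ (L i).toFinset = lab i

/-- The cyclic label sequence obtained by concatenating the arranged labels in the cyclic
order of the vertices. -/
def arranged (n : ℕ) (L : ZMod (n + 1) → List Bool) : List Bool :=
  (List.ofFn (fun j : Fin (n + 1) => L ((j : ℕ) : ZMod (n + 1)))).flatten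

end AltPaper

/-!
View a rotation system as a combinatorial map: a rotation `σ` and the dart reversal `ι`,
whose vertices, faces and components are the cycles of `σ`, the cycles of `σ * ι` and the
orbits of `⟨σ, ι⟩`; genus `0` is Euler's inequality `V - E + F ≥ 2C`. Composing `σ` with the
transposition of two darts on a common face merges their vertices and splits the face, so
planarity survives; doing this along the face through `x₁, x₂, y₁, y₂` identifies the four
vertices. Transpositions at a common vertex detach darts without raising the genus, so the
darts of one lift of each edge of `G/xy` carry a planar map, which is a planar rotation
system of `G/xy`.
-/

namespace AltPaper

open Equiv Equiv.Perm MulAction Subgroup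

section Classes

variable {α β : Type*}

noncomputable def numClasses (s : Setoid α) : ℕ := Nat.card (Quotient s)

lemma numClasses_congr {r : Setoid α} {s : Setoid β} (e : α ≃ β)
    (h : ∀ x y, r x y ↔ s (e x) (e y)) : numClasses r = numClasses s :=
  Nat.card_congr (Quotient.congr e h)

lemma surjective_map_of_le {r s : Setoid α} (h : r ≤ s) :
    Function.Surjective (Setoid.map_of_le h) :=
  Quotient.ind fun a => ⟨Quotient.mk r a, rfl⟩

lemma numClasses_le_of_le [Finite α] {r s : Setoid α} (h : r ≤ s) :
    numClasses s ≤ numClasses r :=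
  Nat.card_le_card_of_surjective _ (surjective_map_of_le h)

lemma numClasses_add_one_le_of_le [Finite α] {r s : Setoid α} (h : r ≤ s) {a b : α}
    (hs : s a b) (hr : ¬ r a b) : numClasses s + 1 ≤ numClasses r := by
  have := Fintype.ofFinite (Quotient r)
  have := Fintype.ofFinite (Quotient s)
  have hninj : ¬ Function.Injective (Setoid.map_of_le h) := fun hinj =>
    hr (Quotient.exact (@hinj (Quotient.mk r a) (Quotient.mk r b) (Quotient.sound hs)))
  simpa only [numClasses, Nat.card_eq_fintype_card] using Nat.succ_le_of_lt
    (Fintype.card_lt_of_surjective_not_injective _ (surjective_map_of_le h) hninj)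

def mergeClasses (s : Setoid α) (a b : α) : Setoid α where
  r x y := s x y ∨ (s x a ∧ s b y) ∨ (s x b ∧ s a y)
  iseqv := by
    refine ⟨fun x => Or.inl (s.refl x), ?_, ?_⟩
    · rintro x y (h | ⟨h₁, h₂⟩ | ⟨h₁, h₂⟩)
      · exact Or.inl (s.symm h)
      · exact Or.inr (Or.inr ⟨s.symm h₂, s.symm h₁⟩)
      · exact Or.inr (Or.inl ⟨s.symm h₂, s.symm h₁⟩)
    · rintro x y z (h | ⟨h₁, h₂⟩ | ⟨h₁, h₂⟩) (g | ⟨g₁, g₂⟩ | ⟨g₁, g₂⟩)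
      · exact Or.inl (s.trans h g)
      · exact Or.inr (Or.inl ⟨s.trans h g₁, g₂⟩)
      · exact Or.inr (Or.inr ⟨s.trans h g₁, g₂⟩)
      · exact Or.inr (Or.inl ⟨h₁, s.trans h₂ g⟩)
      · exact Or.inr (Or.inl ⟨h₁, g₂⟩)
      · exact Or.inl (s.trans h₁ g₂)
      · exact Or.inr (Or.inr ⟨h₁, s.trans h₂ g⟩)
      · exact Or.inl (s.trans h₁ g₂)
      · exact Or.inr (Or.inr ⟨h₁, g₂⟩)

lemma le_mergeClasses (s : Setoid α) (a b : α) : s ≤ mergeClasses s a b :=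
  fun _ _ h => Or.inl h

lemma mergeClasses_rel (s : Setoid α) (a b : α) : mergeClasses s a b a b :=
  Or.inr (Or.inl ⟨s.refl a, s.refl b⟩)

lemma mergeClasses_le_iff {s r : Setoid α} {a b : α} :
    mergeClasses s a b ≤ r ↔ s ≤ r ∧ r a b := by
  refine ⟨fun h => ⟨(le_mergeClasses s a b).trans h, h (mergeClasses_rel s a b)⟩, ?_⟩
  rintro ⟨hsr, hab⟩ x y (h | ⟨h₁, h₂⟩ | ⟨h₁, h₂⟩)
  · exact hsr h
  · exact r.trans (r.trans (hsr h₁) hab) (hsr h₂)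
  · exact r.trans (r.trans (hsr h₁) (r.symm hab)) (hsr h₂)

lemma mergeClasses_eq_self {s : Setoid α} {a b : α} (h : s a b) : mergeClasses s a b = s :=
  le_antisymm (mergeClasses_le_iff.2 ⟨le_rfl, h⟩) (le_mergeClasses s a b)

lemma numClasses_le_mergeClasses_add_one [Finite α] (s : Setoid α) (a b : α) :
    numClasses s ≤ numClasses (mergeClasses s a b) + 1 := by
  classical
  let f : Quotient s → Option (Quotient (mergeClasses s a b)) := fun q =>
    if q = Quotient.mk s a then none else some (Setoid.map_of_le (le_mergeClasses s a b) q)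
  have hf : Function.Injective f := by
    refine Quotient.ind fun x => Quotient.ind fun y hxy => ?_
    by_cases hx : Quotient.mk s x = Quotient.mk s a <;>
      by_cases hy : Quotient.mk s y = Quotient.mk s a <;> simp only [f, hx, hy] at hxy ⊢
    · simp at hxy
    · simp at hxy
    · rcases Quotient.exact (Option.some_injective _ hxy) with h | ⟨h₁, -⟩ | ⟨-, h₂⟩
      · exact Quotient.sound h
      · exact absurd (Quotient.sound h₁) hx
      · exact absurd (Quotient.sound (s.symm h₂)) hy
  simpa [numClasses, Finite.card_option] using Nat.card_le_card_of_injective f hf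

lemma numClasses_le_add_one_of_le_mergeClasses [Finite α] {r s : Setoid α} {a b : α}
    (h : r ≤ mergeClasses s a b) : numClasses s ≤ numClasses r + 1 :=
  (numClasses_le_mergeClasses_add_one s a b).trans (by gcongr; exact numClasses_le_of_le h)

lemma numClasses_eq_add_compl [Finite α] (s : Setoid α) (K : Set α)
    (hK : s ≤ Setoid.ker (· ∈ K)) :
    numClasses s = numClasses (s.comap ((↑) : K → α)) + numClasses (s.comap ((↑) : ↥Kᶜ → α)) := by
  classical
  set R := Set.range (Quotient.mk s ∘ ((↑) : K → α))
  have hRc : Set.range (Quotient.mk s ∘ ((↑) : ↥Kᶜ → α)) = Rᶜ := by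
    ext q
    induction q using Quotient.ind with | _ x => ?_
    have hmem : ∀ y, s y x → (y ∈ K ↔ x ∈ K) := fun y hy => Iff.of_eq (hK hy)
    simp only [R, Set.mem_range, Set.mem_compl_iff, Function.comp_apply, Quotient.eq,
      Subtype.exists, exists_prop, not_exists, not_and]
    exact ⟨fun ⟨y, hy, hyx⟩ z hz hzx => hy ((hmem y hyx).2 ((hmem z hzx).1 hz)),
      fun h => ⟨x, fun hx => h x hx (s.refl x), s.refl x⟩⟩
  rw [numClasses, numClasses, numClasses,
    Nat.card_congr (Setoid.comapQuotientEquiv ((↑) : K → α) s),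
    Nat.card_congr (Setoid.comapQuotientEquiv ((↑) : ↥Kᶜ → α) s), hRc, ← Nat.card_sum]
  exact Nat.card_congr (Equiv.sumCompl (· ∈ R)).symm

end Classes

section Cycles

variable {α : Type*}

noncomputable def numCycles (σ : Perm α) : ℕ := numClasses (SameCycle.setoid σ)

lemma card_orbitRel_quotient_zpowers (σ : Perm α) :
    Nat.card (orbitRel.Quotient (zpowers σ) α) = numCycles σ := by
  refine numClasses_congr (Equiv.refl α) fun x y => ?_
  rw [Equiv.refl_apply, Equiv.refl_apply, orbitRel_apply, mem_orbit_iff]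
  refine ⟨fun ⟨⟨g, hg⟩, hgy⟩ => ?_, fun ⟨k, hk⟩ => ?_⟩
  · obtain ⟨k, rfl⟩ := mem_zpowers_iff.1 hg
    exact (SameCycle.symm ⟨k, hgy⟩ :)
  · exact ⟨⟨σ ^ (-k), zpow_mem (mem_zpowers σ) _⟩, by
      simp [Subgroup.smul_def, Perm.smul_def, ← hk, zpow_neg]⟩

lemma sameCycle_le_of_forall {s : Setoid α} {τ : Perm α} (h : ∀ x, s x (τ x)) :
    SameCycle.setoid τ ≤ s := by
  rintro x _ ⟨n, rfl⟩
  have hstep : ∀ k : ℤ, s ((τ ^ k) x) ((τ ^ (k + 1)) x) := fun k => by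
    rw [add_comm, zpow_one_add, mul_apply]; exact h _
  induction n using Int.induction_on with
  | zero => exact s.refl x
  | succ n ih => exact s.trans ih (hstep n)
  | pred n ih => exact s.trans ih (s.symm (by simpa using hstep (-n - 1)))

lemma mergeClasses_rel_apply_of_swap_mul [DecidableEq α] {s : Setoid α} {σ : Perm α} {a b : α}
    (hs : ∀ x, s x ((swap a b * σ) x)) (x : α) : mergeClasses s a b x (σ x) := by
  have hx : σ x = swap a b ((swap a b * σ) x) := by rw [mul_apply, swap_apply_self]
  rcases eq_or_ne ((swap a b * σ) x) a with ha | ha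
  · rw [hx, ha, swap_apply_left]
    exact Or.inr (Or.inl ⟨ha ▸ hs x, s.refl b⟩)
  rcases eq_or_ne ((swap a b * σ) x) b with hb | hb
  · rw [hx, hb, swap_apply_right]
    exact Or.inr (Or.inr ⟨hb ▸ hs x, s.refl a⟩)
  rw [hx, swap_apply_of_ne_of_ne ha hb]
  exact Or.inl (hs x)

lemma sameCycle_le_mergeClasses_swap_mul [DecidableEq α] (σ : Perm α) (a b : α) :
    SameCycle.setoid σ ≤ mergeClasses (SameCycle.setoid (swap a b * σ)) a b :=
  sameCycle_le_of_forall <|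
    mergeClasses_rel_apply_of_swap_mul fun x => sameCycle_apply_right.2 (SameCycle.refl _ x)

lemma not_sameCycle_of_pow_apply_eq [Finite α] {τ : Perm α} {a b : α} {k : ℕ} (hk : 0 < k)
    (hka : (τ ^ k) a = a) (hb : ∀ j < k, (τ ^ j) a ≠ b) : ¬ τ.SameCycle a b := by
  intro h
  obtain ⟨n, -, hn⟩ := h.exists_pow_eq'
  have hper : Function.IsPeriodicPt τ k a := by
    rw [Function.IsPeriodicPt, Function.IsFixedPt, ← Perm.coe_pow, hka]
  refine hb (n % k) (Nat.mod_lt n hk) ?_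
  rw [Perm.coe_pow, hper.iterate_mod_apply, ← Perm.coe_pow, hn]

theorem sameCycle_swap_mul_iff [Finite α] [DecidableEq α] {σ : Perm α} {a b : α} (hab : a ≠ b) :
    (swap a b * σ).SameCycle a b ↔ ¬ σ.SameCycle a b := by
  classical
  have hex : ∃ n, 0 < n ∧ (σ ^ n) a ∈ ({a, b} : Set α) :=
    ⟨orderOf σ, orderOf_pos σ, by simp [pow_orderOf_eq_one]⟩
  -- `k` is the first return of the `σ`-orbit of `a` to `{a, b}`; up to `k` both orbits agree.
  set k := Nat.find hex
  obtain ⟨hk, hkab⟩ := Nat.find_spec hex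
  have hmin : ∀ j, 0 < j → j < k → (σ ^ j) a ≠ a ∧ (σ ^ j) a ≠ b := fun j hj hjk => by
    simpa [not_or] using fun h => Nat.find_min hex hjk ⟨hj, h⟩
  have hbk : ∀ j < k, (σ ^ j) a ≠ b := fun j hjk => by
    rcases Nat.eq_zero_or_pos j with rfl | hj
    · exact hab
    · exact (hmin j hj hjk).2
  have hwalk : ∀ j < k, ((swap a b * σ) ^ j) a = (σ ^ j) a := by
    intro j hjk
    induction j with
    | zero => rfl
    | succ j ih =>
      rw [pow_succ', mul_apply, ih (by omega), mul_apply, ← mul_apply σ, ← pow_succ']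
      exact swap_apply_of_ne_of_ne (hmin _ (by omega) hjk).1 (hmin _ (by omega) hjk).2
  have hlast : ((swap a b * σ) ^ k) a = swap a b ((σ ^ k) a) := by
    obtain ⟨j, hj⟩ : ∃ j, k = j + 1 := ⟨k - 1, by omega⟩
    rw [hj, pow_succ', mul_apply, hwalk j (by omega), mul_apply, ← mul_apply σ, ← pow_succ']
  rcases hkab with hka | hkb
  · refine iff_of_true ⟨k, ?_⟩ (not_sameCycle_of_pow_apply_eq hk hka hbk)
    rw [zpow_natCast, hlast, hka, swap_apply_left]
  · refine iff_of_false (not_sameCycle_of_pow_apply_eq hk ?_ fun j hj => ?_) (not_not.2 ⟨k, ?_⟩)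
    · rw [hlast, hkb, swap_apply_right]
    · rw [hwalk j hj]; exact hbk j hj
    · rwa [zpow_natCast]

lemma sameCycle_swap_apply_mul_iff [DecidableEq α] {σ : Perm α} {d x y : α} (hx : x ≠ d)
    (hy : y ≠ d) :
    (swap d (σ d) * σ).SameCycle x y ↔ σ.SameCycle x y := by
  have hd : (swap d (σ d) * σ) d = d := by rw [mul_apply, swap_apply_right]
  refine ⟨fun h => ?_, fun h => ?_⟩
  · have := sameCycle_le_mergeClasses_swap_mul (swap d (σ d) * σ) d (σ d)
    rw [swap_mul_self_mul, mergeClasses_eq_self (s := SameCycle.setoid σ)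
      (sameCycle_apply_right.2 (SameCycle.refl σ d))] at this
    exact this h
  · rcases sameCycle_le_mergeClasses_swap_mul σ d (σ d) h with h | ⟨h, -⟩ | ⟨-, h⟩
    · exact h
    · exact absurd (h.eq_of_right hd) hx
    · exact absurd (h.eq_of_left hd).symm hy

variable [Finite α] [DecidableEq α]

lemma sameCycle_setoid_swap_mul_eq {σ : Perm α} {a b : α} (hab : a ≠ b)
    (h : ¬ σ.SameCycle a b) :
    SameCycle.setoid (swap a b * σ) = mergeClasses (SameCycle.setoid σ) a b := by
  have hmerged := (sameCycle_swap_mul_iff hab).2 h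
  refine le_antisymm ?_ (mergeClasses_le_iff.2 ⟨?_, hmerged⟩)
  · simpa only [swap_mul_self_mul] using sameCycle_le_mergeClasses_swap_mul (swap a b * σ) a b
  · simpa only [mergeClasses_eq_self (s := SameCycle.setoid _) hmerged] using
      sameCycle_le_mergeClasses_swap_mul σ a b

lemma numCycles_le_swap_mul_add_one (σ : Perm α) (a b : α) :
    numCycles σ ≤ numCycles (swap a b * σ) + 1 :=
  numClasses_le_add_one_of_le_mergeClasses <| by
    simpa only [swap_mul_self_mul] using sameCycle_le_mergeClasses_swap_mul (swap a b * σ) a b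

lemma numCycles_add_one_le_swap_mul {σ : Perm α} {a b : α} (hab : a ≠ b)
    (h : σ.SameCycle a b) : numCycles σ + 1 ≤ numCycles (swap a b * σ) := by
  refine numClasses_add_one_le_of_le ?_ h fun h' => (sameCycle_swap_mul_iff hab).1 h' h
  simpa only [swap_mul_self_mul, mergeClasses_eq_self (s := SameCycle.setoid σ) h] using
    sameCycle_le_mergeClasses_swap_mul (swap a b * σ) a b

end Cycles

section Maps

variable {α β : Type*}

def componentSetoid (σ ι : Perm α) : Setoid α := orbitRel (closure {σ, ι}) α

noncomputable def numComponents (σ ι : Perm α) : ℕ := numClasses (componentSetoid σ ι)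

lemma componentSetoid_rel_of_mem {σ ι g : Perm α} (hg : g ∈ closure {σ, ι}) (x : α) :
    componentSetoid σ ι x (g x) :=
  ⟨⟨g⁻¹, inv_mem hg⟩, by simp [Subgroup.smul_def, Perm.smul_def]⟩

lemma componentSetoid_le_of_forall {σ ι : Perm α} {s : Setoid α} (hσ : ∀ x, s x (σ x))
    (hι : ∀ x, s x (ι x)) : componentSetoid σ ι ≤ s := by
  have key : ∀ g ∈ closure {σ, ι}, ∀ x, s x (g x) := by
    intro g hg
    induction hg using closure_induction with
    | mem g hg =>
      rcases hg with rfl | rfl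
      exacts [hσ, hι]
    | one => exact s.refl
    | mul g g' _ _ ih ih' => exact fun x => s.trans (ih' x) (ih (g' x))
    | inv g _ ih => exact fun x => s.symm (by simpa using ih (g⁻¹ x))
  rintro _ y ⟨⟨g, hg⟩, rfl⟩
  exact s.symm (key g hg y)

lemma sameCycle_le_componentSetoid_of_mem {σ ι g : Perm α} (hg : g ∈ closure {σ, ι}) :
    SameCycle.setoid g ≤ componentSetoid σ ι :=
  sameCycle_le_of_forall (componentSetoid_rel_of_mem hg)

lemma componentSetoid_le_comap {σ ι : Perm α} {σ' ι' : Perm β} {f : β → α}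
    (hσ : ∀ x, σ (f x) = f (σ' x)) (hι : ∀ x, ι (f x) = f (ι' x)) :
    componentSetoid σ' ι' ≤ (componentSetoid σ ι).comap f :=
  componentSetoid_le_of_forall
    (fun x => by
      rw [Setoid.comap_rel, ← hσ]
      exact componentSetoid_rel_of_mem (subset_closure (Set.mem_insert _ _)) _)
    (fun x => by
      rw [Setoid.comap_rel, ← hι]
      exact componentSetoid_rel_of_mem (subset_closure (Set.mem_insert_of_mem _ rfl)) _)

lemma componentSetoid_le_mergeClasses_swap_mul [DecidableEq α] (σ ι : Perm α) (a b : α) :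
    componentSetoid σ ι ≤ mergeClasses (componentSetoid (swap a b * σ) ι) a b :=
  componentSetoid_le_of_forall
    (mergeClasses_rel_apply_of_swap_mul
      (componentSetoid_rel_of_mem (subset_closure (Set.mem_insert _ _))))
    (fun x => le_mergeClasses _ a b
      (componentSetoid_rel_of_mem (subset_closure (Set.mem_insert_of_mem _ rfl)) x))

variable [Finite α]

lemma numComponents_swap_mul_le_add_one [DecidableEq α] (σ ι : Perm α) (a b : α) :
    numComponents (swap a b * σ) ι ≤ numComponents σ ι + 1 :=
  numClasses_le_add_one_of_le_mergeClasses (componentSetoid_le_mergeClasses_swap_mul σ ι a b)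

lemma numComponents_swap_mul_le [DecidableEq α] {σ ι : Perm α} {a b : α}
    (h : componentSetoid (swap a b * σ) ι a b) :
    numComponents (swap a b * σ) ι ≤ numComponents σ ι :=
  numClasses_le_of_le <| by
    simpa only [mergeClasses_eq_self h] using componentSetoid_le_mergeClasses_swap_mul σ ι a b

end Maps

section PlanarMaps

variable {α : Type*}

/-- The map with vertex rotation `σ` and edge involution `ι` has Euler genus `0`: Euler's
formula `V - E + F = 2C - 2g` with `g ≤ 0`, where `E` is half the number of darts. -/
def IsPlanarMap (σ ι : Perm α) : Prop :=
  4 * numComponents σ ι + Nat.card α ≤ 2 * numCycles (σ * ι) + 2 * numCycles σ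

variable [Finite α] [DecidableEq α] {σ ι : Perm α}

/-- The cycle (vertex or face) through both darts splits in two, which pays for the changes of the
other counts. -/
theorem IsPlanarMap.swap_mul (h : IsPlanarMap σ ι) {a b : α} (hab : a ≠ b)
    (hsc : σ.SameCycle a b ∨ (σ * ι).SameCycle a b) : IsPlanarMap (swap a b * σ) ι := by
  unfold IsPlanarMap at *
  have hmem : swap a b * σ * ι ∈ closure {swap a b * σ, ι} :=
    mul_mem (subset_closure (Set.mem_insert _ _)) (subset_closure (Set.mem_insert_of_mem _ rfl))
  rw [mul_assoc] at hmem ⊢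
  by_cases hv : σ.SameCycle a b
  · have hV := numCycles_add_one_le_swap_mul hab hv
    by_cases hf : (σ * ι).SameCycle a b
    · have hF := numCycles_add_one_le_swap_mul hab hf
      have hC := numComponents_swap_mul_le_add_one σ ι a b
      omega
    · have hF := numCycles_le_swap_mul_add_one (σ * ι) a b
      have hC := numComponents_swap_mul_le
        (sameCycle_le_componentSetoid_of_mem hmem ((sameCycle_swap_mul_iff hab).2 hf))
      omega
  · have hF := numCycles_add_one_le_swap_mul hab (hsc.resolve_left hv)
    have hV := numCycles_le_swap_mul_add_one σ a b
    have hC := numComponents_swap_mul_le (ι := ι) (sameCycle_le_componentSetoid_of_mem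
      (subset_closure (Set.mem_insert _ _)) ((sameCycle_swap_mul_iff hab).2 hv))
    omega

theorem IsPlanarMap.swap_apply_mul (h : IsPlanarMap σ ι) (d : α) :
    IsPlanarMap (swap d (σ d) * σ) ι := by
  rcases eq_or_ne d (σ d) with hd | hd
  · rwa [← hd, swap_self, ← Perm.one_def, one_mul]
  · exact h.swap_mul hd (Or.inl (sameCycle_apply_right.2 (SameCycle.refl σ d)))

/-- The vertices labelled by `S` are spliced one at a time into the vertex of `f` along the face
of `f`. The last conclusion, that every dart of that face still shares a face with the merged
vertex, is what keeps the induction going. -/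
theorem IsPlanarMap.exists_merge_of_face {M : Type*} [DecidableEq M] (h : IsPlanarMap σ ι)
    {μ : α → M} (hμ : ∀ x y, σ.SameCycle x y ↔ μ x = μ y) (f : α) (S : Finset M)
    (hS : ∀ m ∈ S, ∃ z, (σ * ι).SameCycle f z ∧ μ z = m) :
    ∃ τ : Perm α, IsPlanarMap τ ι ∧
      (∀ x y, τ.SameCycle x y ↔ μ x = μ y ∨ μ x ∈ insert (μ f) S ∧ μ y ∈ insert (μ f) S) ∧
      ∀ z, (σ * ι).SameCycle f z → ∃ w, μ w ∈ insert (μ f) S ∧ (τ * ι).SameCycle w z := by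
  induction S using Finset.induction_on with
  | empty =>
    refine ⟨σ, h, fun x y => ?_, fun z hz => ⟨f, Finset.mem_insert_self _ _, hz⟩⟩
    rw [hμ]
    grind
  | insert m S hmS ih =>
    obtain ⟨τ, hτ, hcyc, hface⟩ := ih fun m' hm' => hS m' (Finset.mem_insert_of_mem hm')
    set T := insert (μ f) S
    rw [Finset.insert_comm]
    by_cases hmT : m ∈ T
    · rw [Finset.insert_eq_of_mem hmT]
      exact ⟨τ, hτ, hcyc, hface⟩
    obtain ⟨t, hft, rfl⟩ := hS _ (Finset.mem_insert_self _ _)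
    obtain ⟨w, hwT, hwt⟩ := hface t hft
    have hwt' : w ≠ t := fun h => hmT (h ▸ hwT)
    have hnot : ¬ τ.SameCycle w t := by
      rw [hcyc]
      rintro (h | ⟨-, h⟩)
      exacts [hmT (h ▸ hwT), hmT h]
    refine ⟨swap w t * τ, hτ.swap_mul hwt' (Or.inr hwt), fun x y => ?_, fun z hz => ?_⟩
    · change SameCycle.setoid _ x y ↔ _
      rw [sameCycle_setoid_swap_mul_eq hwt' hnot]
      change τ.SameCycle x y ∨ (τ.SameCycle x w ∧ τ.SameCycle t y) ∨
        (τ.SameCycle x t ∧ τ.SameCycle w y) ↔ _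
      simp only [hcyc, Finset.mem_insert]
      grind
    · obtain ⟨w', hw', hw'z⟩ := hface z hz
      rw [mul_assoc]
      rcases sameCycle_le_mergeClasses_swap_mul (τ * ι) w t hw'z with h | ⟨-, h⟩ | ⟨-, h⟩
      · exact ⟨w', Finset.mem_insert_of_mem hw', h⟩
      · exact ⟨t, Finset.mem_insert_self _ _, h⟩
      · exact ⟨w, Finset.mem_insert_of_mem hwT, h⟩

theorem IsPlanarMap.exists_fix (h : IsPlanarMap σ ι) (F : Finset α) :
    ∃ τ : Perm α, IsPlanarMap τ ι ∧ (∀ d ∈ F, τ d = d) ∧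
      ∀ x ∉ F, ∀ y ∉ F, (τ.SameCycle x y ↔ σ.SameCycle x y) := by
  induction F using Finset.induction_on with
  | empty => exact ⟨σ, h, by simp, fun _ _ _ _ => Iff.rfl⟩
  | insert d F hdF ih =>
    obtain ⟨τ, hτ, hfix, hcyc⟩ := ih
    refine ⟨swap d (τ d) * τ, hτ.swap_apply_mul d, ?_, fun x hx y hy => ?_⟩
    · simp only [Finset.mem_insert, forall_eq_or_imp, mul_apply, swap_apply_right, true_and]
      intro e he
      rw [hfix e he]
      exact swap_apply_of_ne_of_ne (ne_of_mem_of_not_mem he hdF)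
        fun hed => hdF (τ.injective ((hfix e he).trans hed) ▸ he)
    · simp only [Finset.mem_insert, not_or] at hx hy
      rw [sameCycle_swap_apply_mul_iff hx.1 hy.1, hcyc x hx.2 y hy.2]

end PlanarMaps

section Restriction

variable {α β : Type*} {σ ι : Perm α}

lemma numCycles_one : numCycles (1 : Perm α) = Nat.card α :=
  (numClasses_congr (s := ⊥) (Equiv.refl α) fun _ _ => by
    rw [Setoid.bot_def]; exact sameCycle_one).trans (Nat.card_congr Setoid.quotientBotEquiv)

lemma numComponents_one_left (ι : Perm α) : numComponents 1 ι = numCycles ι :=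
  congrArg numClasses <| le_antisymm
    (componentSetoid_le_of_forall (SameCycle.refl ι) fun x => sameCycle_apply_right.2 (.refl ι x))
    (sameCycle_le_componentSetoid_of_mem (subset_closure (Set.mem_insert_of_mem _ rfl)))

lemma sameCycle_iff_of_involutive [Finite α] (hι : Function.Involutive ι) {x y : α} :
    ι.SameCycle x y ↔ y = x ∨ y = ι x := by
  refine ⟨fun h => ?_, ?_⟩
  · obtain ⟨n, -, rfl⟩ := h.exists_pow_eq'
    clear h
    induction n with
    | zero => exact Or.inl rfl
    | succ n ih =>
      rw [pow_succ', mul_apply]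
      rcases ih with h | h <;> rw [h]
      exacts [Or.inr rfl, Or.inl (hι x)]
  · rintro (rfl | rfl)
    exacts [SameCycle.refl ι y, sameCycle_apply_right.2 (SameCycle.refl ι x)]

lemma two_mul_numCycles_of_involutive [Finite α] (hι : Function.Involutive ι)
    (hfree : ∀ x, ι x ≠ x) : 2 * numCycles ι = Nat.card α := by
  classical
  have := Fintype.ofFinite α
  have hfiber : ∀ x : α, Finset.univ.filter (fun y => Quotient.mk (SameCycle.setoid ι) y =
      Quotient.mk _ x) = {x, ι x} := fun x => by
    ext y
    simp only [Finset.mem_filter, Finset.mem_univ, true_and, Quotient.eq, Finset.mem_insert,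
      Finset.mem_singleton]
    exact (sameCycle_comm.trans (sameCycle_iff_of_involutive hι))
  rw [numCycles, numClasses, Nat.card_eq_fintype_card, Nat.card_eq_fintype_card,
    ← Finset.card_univ (α := α), Finset.card_eq_sum_card_fiberwise
      (f := Quotient.mk (SameCycle.setoid ι)) (t := Finset.univ) (by simp)]
  rw [Finset.sum_congr rfl (g := fun _ => 2) fun q _ => Quotient.inductionOn q fun x => by
    rw [hfiber x, Finset.card_pair (hfree x).symm]]
  simp [mul_comm]

lemma apply_mem_iff_of_forall_notMem {τ : Perm α} {K : Set α} (h : ∀ d ∉ K, τ d = d) (d : α) :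
    τ d ∈ K ↔ d ∈ K := by
  by_cases hd : d ∈ K
  · refine iff_of_true (by_contra fun hτd => ?_) hd
    rw [τ.injective (h _ hτd)] at hτd
    exact hτd hd
  · rw [h d hd]

lemma componentSetoid_comap_subtype {K : Set α} (hσ : ∀ x, σ x ∈ K ↔ x ∈ K)
    (hι : ∀ x, ι x ∈ K ↔ x ∈ K) :
    (componentSetoid σ ι).comap ((↑) : K → α) =
      componentSetoid (σ.subtypePerm hσ) (ι.subtypePerm hι) := by
  classical
  refine le_antisymm (fun x y hxy => ?_) (componentSetoid_le_comap (fun _ => rfl) fun _ => rfl)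
  let r : α → K := fun u => if hu : u ∈ K then ⟨u, hu⟩ else x
  have hr : ∀ u : K, r u = u := fun u => dif_pos u.2
  have hstep : ∀ (g : Perm α) (hg : ∀ u, g u ∈ K ↔ u ∈ K), g.subtypePerm hg ∈
      closure {σ.subtypePerm hσ, ι.subtypePerm hι} →
      ∀ u, componentSetoid (σ.subtypePerm hσ) (ι.subtypePerm hι) (r u) (r (g u)) := by
    intro g hg hmem u
    by_cases hu : u ∈ K
    · have : r (g u) = g.subtypePerm hg (r u) := by simp [r, hu, (hg u).2 hu]
      rw [this]
      exact componentSetoid_rel_of_mem hmem _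
    · have : r (g u) = r u := by simp [r, hu, (hg u).not.2 hu]
      rw [this]
  have hle :
      componentSetoid σ ι ≤ (componentSetoid (σ.subtypePerm hσ) (ι.subtypePerm hι)).comap r :=
    componentSetoid_le_of_forall (hstep σ hσ (subset_closure (Set.mem_insert _ _)))
      (hstep ι hι (subset_closure (Set.mem_insert_of_mem _ rfl)))
  simpa only [Setoid.comap_rel, hr] using hle hxy

lemma sameCycle_permCongr_apply_iff (e : α ≃ β) (τ : Perm α) {x y : α} :
    (e.permCongr τ).SameCycle (e x) (e y) ↔ τ.SameCycle x y := by
  have hpow : ∀ k : ℤ, e.permCongr τ ^ k = e.permCongr (τ ^ k) := fun k =>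
    (map_zpow e.permCongrHom τ k).symm
  simp only [SameCycle, hpow, permCongr_apply, symm_apply_apply, e.apply_eq_iff_eq]

lemma componentSetoid_permCongr_apply_iff (e : α ≃ β) (σ ι : Perm α) {x y : α} :
    componentSetoid (e.permCongr σ) (e.permCongr ι) (e x) (e y) ↔ componentSetoid σ ι x y := by
  refine ⟨fun h => ?_, fun h => componentSetoid_le_comap (f := e) (by simp) (by simp) h⟩
  have := componentSetoid_le_comap (f := e.symm) (σ := σ) (ι := ι) (σ' := e.permCongr σ)
    (ι' := e.permCongr ι) (by simp) (by simp) h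
  rwa [Setoid.comap_rel, symm_apply_apply, symm_apply_apply] at this

theorem IsPlanarMap.permCongr (h : IsPlanarMap σ ι) (e : α ≃ β) :
    IsPlanarMap (e.permCongr σ) (e.permCongr ι) := by
  have hV : ∀ τ : Perm α, numCycles (e.permCongr τ) = numCycles τ := fun τ =>
    (numClasses_congr e fun _ _ => (sameCycle_permCongr_apply_iff e τ).symm).symm
  have hC : numComponents (e.permCongr σ) (e.permCongr ι) = numComponents σ ι :=
    (numClasses_congr e fun _ _ => (componentSetoid_permCongr_apply_iff e σ ι).symm).symm
  unfold IsPlanarMap at *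
  rwa [← permCongr_mul, hV, hV, hC, ← Nat.card_congr e]

variable [Finite α]

lemma numCycles_eq_add_compl (τ : Perm α) {K : Set α} (hK : ∀ x, τ x ∈ K ↔ x ∈ K) :
    numCycles τ = numCycles (τ.subtypePerm hK) +
      numCycles (τ.subtypePerm (p := (· ∈ Kᶜ)) fun x => (hK x).not) := by
  rw [numCycles, numClasses_eq_add_compl _ K (sameCycle_le_of_forall fun x => propext (hK x).symm)]
  congr 1 <;> exact congrArg numClasses (Setoid.ext fun _ _ => sameCycle_subtypePerm.symm)

lemma numComponents_eq_add_compl {K : Set α} (hσ : ∀ x, σ x ∈ K ↔ x ∈ K)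
    (hι : ∀ x, ι x ∈ K ↔ x ∈ K) :
    numComponents σ ι = numComponents (σ.subtypePerm hσ) (ι.subtypePerm hι) +
      numComponents (σ.subtypePerm (p := (· ∈ Kᶜ)) fun x => (hσ x).not)
        (ι.subtypePerm (p := (· ∈ Kᶜ)) fun x => (hι x).not) := by
  rw [numComponents, numClasses_eq_add_compl _ K (componentSetoid_le_of_forall
    (fun x => propext (hσ x).symm) fun x => propext (hι x).symm), componentSetoid_comap_subtype,
    componentSetoid_comap_subtype]
  rfl

/-- Outside `K` every edge is isolated, contributing one component, two vertices and one face. -/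
theorem IsPlanarMap.subtypePerm {K : Set α} (h : IsPlanarMap σ ι) (hσ : ∀ d ∉ K, σ d = d)
    (hι : Function.Involutive ι) (hfree : ∀ d, ι d ≠ d) (hιK : ∀ d, ι d ∈ K ↔ d ∈ K) :
    IsPlanarMap (σ.subtypePerm (apply_mem_iff_of_forall_notMem hσ)) (ι.subtypePerm hιK) := by
  have hσK := apply_mem_iff_of_forall_notMem hσ
  have hφK : ∀ d, (σ * ι) d ∈ K ↔ d ∈ K := fun d => (hσK _).trans (hιK d)
  have hσc : σ.subtypePerm (p := (· ∈ Kᶜ)) (fun x => (hσK x).not) = 1 :=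
    Perm.ext fun d => Subtype.ext (hσ d d.2)
  have hφc : (σ * ι).subtypePerm (p := (· ∈ Kᶜ)) (fun x => (hφK x).not) =
      ι.subtypePerm (p := (· ∈ Kᶜ)) fun x => (hιK x).not :=
    Perm.ext fun d => Subtype.ext (hσ _ ((hιK d).not.2 d.2))
  have hV := numCycles_eq_add_compl σ hσK
  have hF := numCycles_eq_add_compl (σ * ι) hφK
  have hC := numComponents_eq_add_compl hσK hιK
  rw [hσc, numCycles_one] at hV
  rw [hφc] at hF
  rw [hσc, numComponents_one_left] at hC
  have hιc : 2 * numCycles (ι.subtypePerm (p := (· ∈ Kᶜ)) fun x => (hιK x).not) =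
      Nat.card {x // x ∈ Kᶜ} :=
    two_mul_numCycles_of_involutive (fun d => Subtype.ext (hι d)) fun d hd =>
      hfree d (congrArg Subtype.val hd)
  have hcard : Nat.card α = Nat.card {x // x ∈ K} + Nat.card {x // x ∈ Kᶜ} := by
    classical
    rw [← Nat.card_sum]
    exact Nat.card_congr (Equiv.sumCompl (· ∈ K)).symm
  unfold IsPlanarMap at *
  change _ ≤ 2 * numCycles ((σ * ι).subtypePerm hφK) + _
  omega

end Restriction

section Submaps

variable {α β : Type*} [Finite α] [DecidableEq α] {σ ι : Perm α}

theorem IsPlanarMap.exists_comap (h : IsPlanarMap σ ι) (hι : Function.Involutive ι)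
    (hfree : ∀ d, ι d ≠ d) {j : β → α} (hj : Function.Injective j) (ι' : Perm β)
    (hιj : ∀ b, ι (j b) = j (ι' b)) :
    ∃ ρ : Perm β, IsPlanarMap ρ ι' ∧ ∀ b b', ρ.SameCycle b b' ↔ σ.SameCycle (j b) (j b') := by
  classical
  set K := Set.range j
  obtain ⟨τ, hτ, hfix, hcyc⟩ := h.exists_fix (Set.toFinite Kᶜ).toFinset
  have hτK : ∀ d ∉ K, τ d = d := fun d hd => hfix d ((Set.Finite.mem_toFinset _).2 hd)
  have hιK : ∀ d, ι d ∈ K ↔ d ∈ K := fun d => by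
    refine ⟨?_, ?_⟩ <;> rintro ⟨b, hb⟩
    · exact ⟨ι' b, by rw [← hιj, hb, hι]⟩
    · exact ⟨ι' b, by rw [← hιj, hb]⟩
  let e := Equiv.ofInjective j hj
  have hρι : e.symm.permCongr (ι.subtypePerm hιK) = ι' := Perm.ext fun b => by
    rw [permCongr_apply, symm_symm, Equiv.symm_apply_eq]
    exact Subtype.ext (hιj b)
  refine ⟨e.symm.permCongr (τ.subtypePerm (apply_mem_iff_of_forall_notMem hτK)),
    hρι ▸ (hτ.subtypePerm hτK hι hfree hιK).permCongr e.symm, fun b b' => ?_⟩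
  rw [← e.symm_apply_apply b, ← e.symm_apply_apply b', sameCycle_permCongr_apply_iff,
    sameCycle_subtypePerm, e.symm_apply_apply, e.symm_apply_apply]
  exact hcyc _ (fun hb => (Set.Finite.mem_toFinset _).1 hb (e b).2) _
    (fun hb => (Set.Finite.mem_toFinset _).1 hb (e b').2)

end Submaps

namespace RotSys

variable {V : Type*} {G : SimpleGraph V}

lemma sameCycle_rot_iff (R : RotSys G) {d d' : G.Dart} : R.rot.SameCycle d d' ↔ d.fst = d'.fst :=
  ⟨fun h => sameCycle_le_of_forall (s := Setoid.ker fun d : G.Dart => d.fst)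
      (fun d => (R.fst_rot d).symm) h,
    fun h => let ⟨n, hn⟩ := R.orbit_full d d' h; ⟨n, by rwa [zpow_natCast]⟩⟩

def ofSameCycle [Finite G.Dart] (ρ : Perm G.Dart)
    (h : ∀ d d', ρ.SameCycle d d' ↔ d.fst = d'.fst) : RotSys G where
  rot := ρ
  fst_rot d := ((h _ _).1 (sameCycle_apply_right.2 (.refl ρ d))).symm
  orbit_full d d' hdd' := by
    obtain ⟨n, -, hn⟩ := ((h d d').2 hdd').exists_pow_eq'
    exact ⟨n, hn⟩

lemma genusLE_zero_iff [Finite V] (R : RotSys G) :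
    R.genusLE 0 ↔ IsPlanarMap R.rot (dartRev G) := by
  classical
  have := Fintype.ofFinite V
  have hE : Nat.card G.Dart = 2 * Nat.card G.edgeSet := by
    rw [Nat.card_eq_fintype_card, G.dart_card_eq_twice_card_edges, Nat.card_eq_card_toFinset]
    rfl
  rw [genusLE, IsPlanarMap, numFaces, numVerts, card_orbitRel_quotient_zpowers,
    card_orbitRel_quotient_zpowers, hE]
  change 2 * numComponents R.rot (dartRev G) + _ ≤ _ + numCycles (R.rot * dartRev G) + _ ↔ _
  omega

lemma CofacialSet.exists_sameCycle {R : RotSys G} {s : Set V} (h : R.CofacialSet s) {v : V}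
    (hv : v ∈ s) :
    ∃ f : G.Dart, f.fst = v ∧ ∀ w ∈ s, ∃ z, (R.rot * dartRev G).SameCycle f z ∧ z.fst = w := by
  obtain ⟨d, hd⟩ := h
  obtain ⟨m, hm⟩ := hd v hv
  refine ⟨(R.facePerm ^ m) d, hm, fun w hw => ?_⟩
  obtain ⟨n, hn⟩ := hd w hw
  exact ⟨(R.facePerm ^ n) d, (SameCycle.refl _ d).pow_left.pow_right, hn⟩

end RotSys

section Pinch

variable {V : Type*} [DecidableEq V] {G : SimpleGraph V} {G' : SimpleGraph (V ⊕ Bool)} {x y : V}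

def pinchMap (x y : V) : V ⊕ Bool → V
  | Sum.inl v => if v = y then x else v
  | Sum.inr _ => x

lemma pinchMap_eq_iff (u v : V ⊕ Bool) :
    pinchMap x y u = pinchMap x y v ↔ u = v ∨
      u ∈ ({Sum.inl x, Sum.inr false, Sum.inl y, Sum.inr true} : Finset (V ⊕ Bool)) ∧
      v ∈ ({Sum.inl x, Sum.inr false, Sum.inl y, Sum.inr true} : Finset (V ⊕ Bool)) := by
  rcases u with u | (_ | _) <;> rcases v with v | (_ | _) <;> simp only [pinchMap] <;> grind

lemma pinchMap_of_splitProj {u : V ⊕ Bool} {a : V} (ha : a ≠ y)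
    (h : splitProj x y u = a ∨ splitProj x y u = y ∧ a = x) : pinchMap x y u = a := by
  rcases u with u | (_ | _) <;> simp only [splitProj, pinchMap] at h ⊢ <;> grind

lemma exists_dart_lift (hsplit : IsSplitAt G x y G') (pd : (pinch G x y).Dart) :
    ∃ d : G'.Dart, pinchMap x y d.fst = pd.fst ∧ pinchMap x y d.snd = pd.snd := by
  have key : ∀ a b, (a ≠ y ∧ b ≠ y ∧ ∃ a' b', G.Adj a' b' ∧ (a' = a ∨ a' = y ∧ a = x) ∧
      (b' = b ∨ b' = y ∧ b = x)) →
      ∃ d : G'.Dart, pinchMap x y d.fst = a ∧ pinchMap x y d.snd = b := by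
    rintro a b ⟨ha, hb, a', b', hadj, ha', hb'⟩
    obtain ⟨u, w, huw, rfl, rfl⟩ := hsplit.2.1 a' b' hadj
    exact ⟨⟨(u, w), huw⟩, pinchMap_of_splitProj ha ha', pinchMap_of_splitProj hb hb'⟩
  rcases ((SimpleGraph.fromRel_adj _ _ _).1 pd.adj).2 with hab | hba
  · exact key _ _ hab
  · obtain ⟨d, h₁, h₂⟩ := key _ _ hba
    exact ⟨d.symm, h₂, h₁⟩

lemma exists_dart_lift_edge (hsplit : IsSplitAt G x y G') (e : (pinch G x y).edgeSet) :
    ∃ d : G'.Dart, s(pinchMap x y d.fst, pinchMap x y d.snd) = e := by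
  obtain ⟨⟨a, b⟩, he⟩ := e
  obtain ⟨d, h₁, h₂⟩ := exists_dart_lift hsplit ⟨(a, b), he⟩
  exact ⟨d, by rw [h₁, h₂]⟩

noncomputable def edgeLift (hsplit : IsSplitAt G x y G') (e : (pinch G x y).edgeSet) : G'.Dart :=
  (exists_dart_lift_edge hsplit e).choose

/-- The lift is chosen per edge and then oriented, so that it commutes with reversal. -/
noncomputable def dartLift (hsplit : IsSplitAt G x y G') (pd : (pinch G x y).Dart) : G'.Dart :=
  if pinchMap x y (edgeLift hsplit ⟨pd.edge, pd.edge_mem⟩).fst = pd.fst then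
    edgeLift hsplit ⟨pd.edge, pd.edge_mem⟩
  else (edgeLift hsplit ⟨pd.edge, pd.edge_mem⟩).symm

variable (hsplit : IsSplitAt G x y G')
include hsplit

lemma pinchMap_dartLift (pd : (pinch G x y).Dart) :
    pinchMap x y (dartLift hsplit pd).fst = pd.fst ∧
      pinchMap x y (dartLift hsplit pd).snd = pd.snd := by
  have hspec : s(pinchMap x y (edgeLift hsplit ⟨pd.edge, pd.edge_mem⟩).fst,
      pinchMap x y (edgeLift hsplit ⟨pd.edge, pd.edge_mem⟩).snd) = s(pd.fst, pd.snd) :=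
    (exists_dart_lift_edge hsplit _).choose_spec
  rw [Sym2.eq_iff] at hspec
  unfold dartLift
  split_ifs with h
  · exact hspec.resolve_right fun h' => pd.adj.ne (h.symm.trans h'.1)
  · exact (hspec.resolve_left fun h' => h h'.1).symm

lemma dartLift_injective : Function.Injective (dartLift hsplit) := fun pd pd' h => by
  have h₁ := pinchMap_dartLift hsplit pd
  have h₂ := pinchMap_dartLift hsplit pd'
  rw [h] at h₁
  exact SimpleGraph.Dart.ext _ _ (Prod.ext (h₁.1.symm.trans h₂.1) (h₁.2.symm.trans h₂.2))

lemma dartLift_symm (pd : (pinch G x y).Dart) :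
    dartLift hsplit pd.symm = (dartLift hsplit pd).symm := by
  have hedge : (⟨pd.symm.edge, pd.symm.edge_mem⟩ : (pinch G x y).edgeSet) =
      ⟨pd.edge, pd.edge_mem⟩ := Subtype.ext pd.edge_symm
  have h₁ := pinchMap_dartLift hsplit pd
  have h₂ := pinchMap_dartLift hsplit pd.symm
  unfold dartLift at *
  rw [hedge] at h₂ ⊢
  split_ifs at h₁ h₂ ⊢ <;> simp_all [pd.adj.ne]

end Pinch

end AltPaper

open AltPaper in
theorem statement_10_general {V : Type*} [Fintype V] (G : SimpleGraph V) (x y : V)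
    (h : ∃ G' : SimpleGraph (V ⊕ Bool), IsSplitAt G x y G' ∧
      ∃ R : RotSys G', R.genusLE 0 ∧
        R.CofacialSet {Sum.inl x, Sum.inl y, Sum.inr false, Sum.inr true}) :
    GenusLE (pinch G x y) 0 := by
  classical
  obtain ⟨G', hsplit, R, hR, hcof⟩ := h
  obtain ⟨f, hfx, hface⟩ := hcof.exists_sameCycle (v := Sum.inl x) (by simp)
  obtain ⟨τ, hτ, hτcyc, -⟩ := ((R.genusLE_zero_iff).1 hR).exists_merge_of_face
    (fun _ _ => R.sameCycle_rot_iff) f {Sum.inr false, Sum.inl y, Sum.inr true}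
    fun m hm => hface m (by simp only [Finset.mem_insert, Finset.mem_singleton] at hm; aesop)
  obtain ⟨ρ, hρ, hρcyc⟩ := hτ.exists_comap (fun d => d.symm_symm) SimpleGraph.Dart.symm_ne
    (dartLift_injective hsplit) (dartRev _) fun pd => (dartLift_symm hsplit pd).symm
  have hρrot : ∀ pd pd', ρ.SameCycle pd pd' ↔ pd.fst = pd'.fst := fun pd pd' => by
    rw [hρcyc, hτcyc, hfx, ← pinchMap_eq_iff, (pinchMap_dartLift hsplit pd).1,
      (pinchMap_dartLift hsplit pd').1]
  exact ⟨RotSys.ofSameCycle ρ hρrot, (RotSys.genusLE_zero_iff _).2 hρ⟩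

open AltPaper in
/-- If `G` is non-planar and splitting `x` and `y` yields a planar graph with
`x₁, x₂, y₁, y₂` on a common face, then the graph `G/xy` obtained by identifying `x` and
`y` (and simplifying) is planar. -/
theorem statement_10 {V : Type*} [Fintype V] (G : SimpleGraph V) (x y : V) (hxy : x ≠ y)
    (hnp : ¬ GenusLE G 0)
    (h : ∃ G' : SimpleGraph (V ⊕ Bool), IsSplitAt G x y G' ∧
      ∃ R : RotSys G', R.genusLE 0 ∧
        R.CofacialSet {Sum.inl x, Sum.inl y, Sum.inr false, Sum.inr true}) :
    GenusLE (pinch G x y) 0 :=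
  statement_10_general G x y h
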